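/- On a compact Vilenkin group G of constant order κ with subgroup chain {G_n}_{n≥0} and Haar measure normalized to |G| = 1, the Riesz distribution convolution property holds at the level of Fourier transforms: for s ∉ 1 + (2πi/ln κ)ℤ, the distribution r_s with ⟨r_s, f⟩ = ((1-κ^{-1})/(1-κ^{s-1})) f(e) + ((1-κ^{-s})/(1-κ^{s-1})) ∫_G |x|_𝒢^{s-1}(f(x)-f(e)) dx satisfies lim_{s→0} ⟨r_s, f⟩ = f(e) for every locally constant f : G → ℂ. -/

import Mathlib

open MeasureTheory Filter Topology

/-!
Since `f` is locally constant, `f x - f 1` vanishes on some `G_N`, while off `G_N` the quasi-norm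
is at least `κ^{-N}`; hence for `Re s > -1` the integrand is bounded by `κ^{2N} sup ‖f - f 1‖`
uniformly in `s`, so the integral stays bounded as `s → 0`. The coefficient of the integral tends
to `0` and that of `f 1` tends to `1`.
-/

lemma exists_lt_mem_notMem_succ {α : Type*} {S : ℕ → Set α} {x : α} (h0 : x ∈ S 0) :
    ∀ {N : ℕ}, x ∉ S N → ∃ k < N, x ∈ S k ∧ x ∉ S (k + 1)
  | 0, hN => absurd h0 hN
  | N + 1, hN => by
    by_cases hx : x ∈ S N
    · exact ⟨N, N.lt_succ_self, hx, hN⟩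
    · obtain ⟨k, hk, hxk⟩ := exists_lt_mem_notMem_succ h0 hx
      exact ⟨k, hk.trans N.lt_succ_self, hxk⟩

lemma norm_ofReal_zpow_neg_cpow_le {κ : ℝ} (hκ : 1 ≤ κ) {k N : ℕ} (hkN : k ≤ N) {z : ℂ}
    (hz : -2 ≤ z.re) : ‖(((κ ^ (-(k : ℤ)) : ℝ) : ℂ) ^ z)‖ ≤ κ ^ (2 * N) := by
  have hκ0 : 0 < κ := one_pos.trans_le hκ
  rw [Complex.norm_cpow_eq_rpow_re_of_pos (zpow_pos hκ0 _), ← Real.rpow_intCast,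
    ← Real.rpow_mul hκ0.le, ← Real.rpow_natCast]
  refine Real.rpow_le_rpow_of_exponent_le hκ ?_
  have hk : (k : ℝ) ≤ N := by exact_mod_cast hkN
  push_cast
  nlinarith [k.cast_nonneg (α := ℝ)]

lemma isBoundedUnder_norm_integral {α ι E : Type*} [MeasurableSpace α] [NormedAddCommGroup E]
    [NormedSpace ℝ E] {μ : Measure α} [IsFiniteMeasure μ] {l : Filter ι} {F : ι → α → E}
    {C : ℝ} (hF : ∀ᶠ i in l, ∀ᵐ x ∂μ, ‖F i x‖ ≤ C) :
    IsBoundedUnder (· ≤ ·) l fun i => ‖∫ x, F i x ∂μ‖ :=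
  ⟨μ.real Set.univ * C, eventually_map.2 <| hF.mono fun _ h =>
    (norm_integral_le_of_norm_le_const h).trans_eq (mul_comm _ _)⟩

lemma continuousAt_div_one_sub_cpow_sub_one {a : ℂ} (ha0 : a ≠ 0) (ha1 : a ≠ 1) {g : ℂ → ℂ}
    (hg : ContinuousAt g 0) :
    ContinuousAt (fun s : ℂ => g s / (1 - a ^ (s - 1))) 0 := by
  refine hg.div (continuous_const.sub
    ((continuous_id.sub continuous_const).const_cpow (.inl ha0))).continuousAt ?_
  simpa [Complex.cpow_neg_one, sub_eq_zero, eq_comm (a := (1 : ℂ))] using ha1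

lemma tendsto_one_sub_inv_div_one_sub_cpow_sub_one {a : ℂ} (ha0 : a ≠ 0) (ha1 : a ≠ 1) :
    Tendsto (fun s : ℂ => (1 - a⁻¹) / (1 - a ^ (s - 1))) (𝓝 0) (𝓝 1) := by
  have hinv : 1 - a⁻¹ ≠ 0 := by rwa [sub_ne_zero, ne_comm, inv_ne_one]
  simpa [Complex.cpow_neg_one, hinv] using (continuousAt_div_one_sub_cpow_sub_one ha0 ha1
    (g := fun _ => 1 - a⁻¹) continuousAt_const).tendsto

lemma tendsto_one_sub_cpow_neg_div_one_sub_cpow_sub_one {a : ℂ} (ha0 : a ≠ 0)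
    (ha1 : a ≠ 1) :
    Tendsto (fun s : ℂ => (1 - a ^ (-s)) / (1 - a ^ (s - 1))) (𝓝 0) (𝓝 0) := by
  simpa using (continuousAt_div_one_sub_cpow_sub_one ha0 ha1 (g := fun s => 1 - a ^ (-s))
    (continuous_const.sub (continuous_neg.const_cpow (.inl ha0))).continuousAt).tendsto

theorem stmt_11_general {G : Type*} [Group G] [TopologicalSpace G]
    [CompactSpace G] [MeasurableSpace G]
    (μ : Measure G) (hμ : μ Set.univ = 1)
    (Gn : ℕ → Subgroup G) (h0 : Gn 0 = ⊤)
    (hbasis : ∀ U ∈ nhds (1 : G), ∃ n, (Gn n : Set G) ⊆ U)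
    (κ : ℕ) (hκ : 2 ≤ κ)
    (ν : G → ℝ)
    (hν : ∀ (n : ℕ) (x : G), x ∈ Gn n → x ∉ Gn (n + 1) → ν x = (κ : ℝ) ^ (-(n : ℤ)))
    (f : G → ℂ) (hf : IsLocallyConstant f) :
    Filter.Tendsto (fun s : ℂ =>
        ((1 - (κ : ℂ)⁻¹) / (1 - (κ : ℂ) ^ (s - 1))) * f 1 +
        ((1 - (κ : ℂ) ^ (-s)) / (1 - (κ : ℂ) ^ (s - 1))) *
          ∫ x, ((ν x : ℂ) ^ (s - 1)) * (f x - f 1) ∂μ)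
      (nhds 0) (nhds (f 1)) := by
  have : IsFiniteMeasure μ := ⟨by simp [hμ]⟩
  have hκ_one_le : (1 : ℝ) ≤ κ := by exact_mod_cast (by omega : 1 ≤ κ)
  obtain ⟨N, hN⟩ := hbasis _ ((hf.isOpen_fiber (f 1)).mem_nhds rfl)
  obtain ⟨M, hM⟩ :=
    (isCompact_range (hf.continuous.sub continuous_const :
      Continuous fun x => f x - f 1)).isBounded.exists_norm_le
  have hM0 : 0 ≤ M := (norm_nonneg _).trans (hM _ ⟨1, rfl⟩)
  have hbound : ∀ s : ℂ, -1 < s.re → ∀ x,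
      ‖(ν x : ℂ) ^ (s - 1) * (f x - f 1)‖ ≤ κ ^ (2 * N) * M := by
    intro s hs x
    by_cases hx : x ∈ Gn N
    · simp only [show f x = f 1 from hN hx, sub_self, mul_zero, norm_zero]
      positivity
    obtain ⟨k, hkN, hxk, hxk1⟩ :=
      exists_lt_mem_notMem_succ (S := fun n => (Gn n : Set G)) (by simp [h0]) hx
    rw [norm_mul, hν k x hxk hxk1]
    exact mul_le_mul (norm_ofReal_zpow_neg_cpow_le hκ_one_le hkN.le (by simp; linarith))
      (hM _ ⟨x, rfl⟩) (norm_nonneg _) (by positivity)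
  have hre : ∀ᶠ s : ℂ in 𝓝 0, -1 < s.re :=
    (Complex.continuous_re.tendsto 0).eventually_const_lt (by simp)
  have hbdd := isBoundedUnder_norm_integral (μ := μ)
    (hre.mono fun s hs => ae_of_all _ (hbound s hs))
  have hκ0 : (κ : ℂ) ≠ 0 := by exact_mod_cast (by omega : κ ≠ 0)
  have hκ1 : (κ : ℂ) ≠ 1 := by exact_mod_cast (by omega : κ ≠ 1)
  simpa using ((tendsto_one_sub_inv_div_one_sub_cpow_sub_one hκ0 hκ1).mul_const (f 1)).add
    ((tendsto_one_sub_cpow_neg_div_one_sub_cpow_sub_one hκ0 hκ1).zero_mul_isBoundedUnder_le hbdd)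

/-- On a compact Vilenkin group `G` of constant order `κ` with normalized Haar measure,
the Riesz distributions `r_s`, given by
`⟨r_s, f⟩ = ((1-κ⁻¹)/(1-κ^{s-1})) f(1) + ((1-κ^{-s})/(1-κ^{s-1})) ∫_G |x|_𝒢^{s-1}(f(x)-f(1)) dx`,
satisfy `lim_{s→0} ⟨r_s, f⟩ = f(1)` for every locally constant `f : G → ℂ`. -/
theorem stmt_11 {G : Type*} [Group G] [TopologicalSpace G] [IsTopologicalGroup G]
    [CompactSpace G] [MeasurableSpace G] [BorelSpace G]
    (μ : Measure G) [μ.IsHaarMeasure] (hμ : μ Set.univ = 1)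
    (Gn : ℕ → Subgroup G) (hopen : ∀ n, IsOpen (Gn n : Set G))
    (hnorm : ∀ n, (Gn n).Normal) (hanti : StrictAnti Gn) (h0 : Gn 0 = ⊤)
    (hinter : (⨅ n, Gn n) = ⊥)
    (hbasis : ∀ U ∈ nhds (1 : G), ∃ n, (Gn n : Set G) ⊆ U)
    (κ : ℕ) (hκ : 2 ≤ κ) (hindex : ∀ n, (Gn (n + 1)).relIndex (Gn n) = κ)
    (ν : G → ℝ) (hν1 : ν 1 = 0)
    (hν : ∀ (n : ℕ) (x : G), x ∈ Gn n → x ∉ Gn (n + 1) → ν x = (κ : ℝ) ^ (-(n : ℤ)))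
    (f : G → ℂ) (hf : IsLocallyConstant f) :
    Filter.Tendsto (fun s : ℂ =>
        ((1 - (κ : ℂ)⁻¹) / (1 - (κ : ℂ) ^ (s - 1))) * f 1 +
        ((1 - (κ : ℂ) ^ (-s)) / (1 - (κ : ℂ) ^ (s - 1))) *
          ∫ x, ((ν x : ℂ) ^ (s - 1)) * (f x - f 1) ∂μ)
      (nhds 0) (nhds (f 1)) :=
  stmt_11_general μ hμ Gn h0 hbasis κ hκ ν hν f hf
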